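/- Let J be a monomial ideal in S = K[x_1,...,x_n] with decomposition J = Σ_{j=0}^{α} x_1^j · (I_j · S), I_j = (J : x_1^j) ∩ T where T = K[x_2,...,x_n]. Then for every integer s ≥ 0, the Hilbert function satisfies h_{S/J}(s) = Σ_{j=0}^{α−1} h_{T/I_j}(s−j) + h_{S/(I_α·S)}(s−α). -/

import Mathlib

/-!
Sort the degree-`s` monomials of `S` by their `x_1`-exponent `j`. For a monomial ideal, a monomial
`x_1^j m` with `m ∈ T` lies outside `J` iff `m ∉ I_j`, so the monomials of exponent `j` outside `J`
are counted by `h_{T/I_j}(s - j)`. Every monomial of `J` is divisible by a minimal generator, whose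
`x_1`-exponent is at most `α`; hence `I_j = I_α` for `j ≥ α`, and the tail
`∑_{j ≥ α} h_{T/I_α}(s - j)` is the same count for `I_α S`, all of whose slices are `I_α`.
-/

open MvPolynomial

/-- A monomial ideal: an ideal generated by monomials. -/
def IsMonomialIdeal {K : Type} [Field K] {m : ℕ} (J : Ideal (MvPolynomial (Fin m) K)) : Prop :=
  ∃ G : Set (Fin m →₀ ℕ), J = Ideal.span ((fun d => (monomial d (1 : K))) '' G)

/-- `d` is the exponent vector of a minimal monomial generator of the monomial ideal `J`. -/
def IsMinGen {K : Type} [Field K] {m : ℕ} (J : Ideal (MvPolynomial (Fin m) K))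
    (d : Fin m →₀ ℕ) : Prop :=
  (monomial d (1 : K)) ∈ J ∧
    ∀ i : Fin m, 0 < d i → (monomial (d - Finsupp.single i 1) (1 : K)) ∉ J

/-- Borel-fixed monomial ideal: stable under the moves `m ↦ (x_j/x_i)·m` for `j < i`. -/
def IsBorelFixed {K : Type} [Field K] {m : ℕ} (J : Ideal (MvPolynomial (Fin m) K)) : Prop :=
  IsMonomialIdeal J ∧
    ∀ d : Fin m →₀ ℕ, (monomial d (1 : K)) ∈ J → ∀ i j : Fin m, j < i → 0 < d i →
      (monomial (d - Finsupp.single i 1 + Finsupp.single j 1) (1 : K)) ∈ J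

/-- The inclusion `K[x_2,...,x_{n+1}] → K[x_1,...,x_{n+1}]` (variable index 0 is `x_1`). -/
noncomputable def varShift (K : Type) [Field K] (n : ℕ) :
    MvPolynomial (Fin n) K →ₐ[K] MvPolynomial (Fin (n + 1)) K :=
  rename Fin.succ

/-- `I_j = (J : x_1^j) ∩ K[x_2,...,x_{n+1}]`, an ideal of `T = K[x_2,...,x_{n+1}]`. -/
noncomputable def sliceIdeal {K : Type} [Field K] {n : ℕ}
    (J : Ideal (MvPolynomial (Fin (n + 1)) K)) (j : ℕ) : Ideal (MvPolynomial (Fin n) K) :=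
  Ideal.comap (varShift K n) (J.colon (Ideal.span {(X 0 : MvPolynomial (Fin (n + 1)) K) ^ j}))

/-- The Hilbert function of `S/J`: the `K`-dimension of the degree `s` part. -/
noncomputable def hilb {K : Type} [Field K] {m : ℕ}
    (J : Ideal (MvPolynomial (Fin m) K)) (s : ℕ) : ℕ :=
  Module.finrank K (homogeneousSubmodule (Fin m) K s) -
    Module.finrank K
      (homogeneousSubmodule (Fin m) K s ⊓ Submodule.restrictScalars K J :
        Submodule K (MvPolynomial (Fin m) K))

/-- A homogeneous ideal (with respect to total degree). -/
def IsHomogeneousIdeal {K : Type} [Field K] {m : ℕ}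
    (I : Ideal (MvPolynomial (Fin m) K)) : Prop :=
  ∀ p ∈ I, ∀ k : ℕ, (homogeneousComponent k p) ∈ I

/-- `α` is the initial degree of `J`: the least degree of a nonzero (homogeneous) element. -/
def IsInitialDegree {K : Type} [Field K] {m : ℕ}
    (J : Ideal (MvPolynomial (Fin m) K)) (α : ℕ) : Prop :=
  IsLeast {k : ℕ | ∃ p ∈ J, p ≠ 0 ∧ MvPolynomial.IsHomogeneous p k} α

/-- The height (codimension) of an ideal: the infimum of heights of primes containing it. -/
noncomputable def idealHeight {R : Type} [CommRing R] (I : Ideal R) : ℕ∞ :=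
  ⨅ (P : PrimeSpectrum R) (_ : I ≤ P.asIdeal), Order.height P

/-- `S/J` is Cohen-Macaulay: there is a regular sequence inside the irrelevant maximal
ideal of length equal to the Krull dimension of `S/J`. -/
def IsCMQuotient {K : Type} [Field K] {m : ℕ} (J : Ideal (MvPolynomial (Fin m) K)) : Prop :=
  ∃ rs : List (MvPolynomial (Fin m) K),
    (∀ f ∈ rs, f ∈ Ideal.span (Set.range (X : Fin m → MvPolynomial (Fin m) K))) ∧
    RingTheory.Sequence.IsRegular (MvPolynomial (Fin m) K ⧸ J) rs ∧
    (rs.length : WithBot ℕ∞) = ringKrullDim (MvPolynomial (Fin m) K ⧸ J)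

/-- An unmixed ideal: all associated primes of `R/I` have the same height, namely that of `I`. -/
def IsUnmixed {K : Type} [Field K] {m : ℕ} (I : Ideal (MvPolynomial (Fin m) K)) : Prop :=
  ∀ P ∈ associatedPrimes (MvPolynomial (Fin m) K) (MvPolynomial (Fin m) K ⧸ I),
    idealHeight P = idealHeight I

/-- Degree-lexicographic order on exponent vectors: `d > e`. -/
def DegLexGT {m : ℕ} (d e : Fin m →₀ ℕ) : Prop :=
  (e.sum fun _ k => k) < (d.sum fun _ k => k) ∨
    ((d.sum fun _ k => k) = (e.sum fun _ k => k) ∧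
      ∃ i : Fin m, (∀ k < i, d k = e k) ∧ e i < d i)

/-- A lex-segment monomial ideal. -/
def IsLexSegment {K : Type} [Field K] {m : ℕ} (J : Ideal (MvPolynomial (Fin m) K)) : Prop :=
  IsMonomialIdeal J ∧
    ∀ d e : Fin m →₀ ℕ, (d.sum fun _ k => k) = (e.sum fun _ k => k) →
      DegLexGT d e → (monomial e (1 : K)) ∈ J → (monomial d (1 : K)) ∈ J

/-- `macaulayBound d a = a^{⟨d⟩}`, the Macaulay upper bound computed from the `d`-th
binomial expansion of `a`. -/
def macaulayBound : ℕ → ℕ → ℕ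
  | _, 0 => 0
  | 0, _ + 1 => 0
  | d + 1, a + 1 =>
    let k := Nat.findGreatest (fun k => Nat.choose k (d + 1) ≤ a + 1) (a + d + 2)
    Nat.choose (k + 1) (d + 2) + macaulayBound d (a + 1 - Nat.choose k (d + 1))

/-- The first difference of a numerical function (with `f(-1) = 0`). -/
def delta (f : ℕ → ℤ) : ℕ → ℤ
  | 0 => f 0
  | n + 1 => f (n + 1) - f n

/-- An O-sequence: `f(0) = 1`, nonnegative, satisfying Macaulay's growth condition. -/
def IsOSequence (f : ℕ → ℤ) : Prop :=
  f 0 = 1 ∧ (∀ t, 0 ≤ f t) ∧ ∀ t, 1 ≤ t → f (t + 1) ≤ (macaulayBound t (f t).toNat : ℤ)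

open Finset

namespace Finsupp

variable {n : ℕ}

lemma cons_add_cons (a b : ℕ) (f g : Fin n →₀ ℕ) : cons a f + cons b g = cons (a + b) (f + g) := by
  ext i
  refine Fin.cases ?_ (fun i => ?_) i <;> simp

lemma cons_le_cons_iff {a b : ℕ} {f g : Fin n →₀ ℕ} : cons a f ≤ cons b g ↔ a ≤ b ∧ f ≤ g := by
  simp [Finsupp.le_def, Fin.forall_fin_succ]

lemma mapDomain_succ_eq_cons {M : Type*} [AddCommMonoid M] (f : Fin n →₀ M) :
    mapDomain Fin.succ f = cons 0 f := by
  ext i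
  refine Fin.cases ?_ (fun i => ?_) i
  · simp [mapDomain_of_notMem_range]
  · simp [mapDomain_apply (Fin.succ_injective n)]

lemma degree_cons (j : ℕ) (e : Fin n →₀ ℕ) : (cons j e).degree = j + e.degree := by
  simp [degree_eq_sum, Fin.sum_univ_succ]

end Finsupp

def exponentsOfDegree (m s : ℕ) : Finset (Fin m →₀ ℕ) := finsuppAntidiag univ s

lemma mem_exponentsOfDegree {m s : ℕ} {d : Fin m →₀ ℕ} :
    d ∈ exponentsOfDegree m s ↔ d.degree = s := by
  simp [exponentsOfDegree, Finsupp.degree_eq_sum]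

lemma card_filter_exponentsOfDegree_succ {n : ℕ} (s : ℕ) (P : (Fin (n + 1) →₀ ℕ) → Prop)
    [DecidablePred P] :
    #{d ∈ exponentsOfDegree _ s | P d} =
      ∑ j ∈ range (s + 1), #{e ∈ exponentsOfDegree _ (s - j) | P (Finsupp.cons j e)} := by
  have hmaps : ∀ d ∈ {d ∈ exponentsOfDegree _ s | P d}, d 0 ∈ range (s + 1) := by
    intro d hd
    rw [mem_filter, mem_exponentsOfDegree] at hd
    rw [mem_range, Nat.lt_succ_iff, ← hd.1, ← Finsupp.cons_tail d, Finsupp.degree_cons]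
    simp
  rw [card_eq_sum_card_fiberwise hmaps]
  refine sum_congr rfl fun j hj => card_nbij' Finsupp.tail (Finsupp.cons j) ?_ ?_ ?_ ?_
  · intro d hd
    simp only [mem_coe, mem_filter, mem_exponentsOfDegree] at hd ⊢
    obtain ⟨⟨hdeg, hP⟩, rfl⟩ := hd
    rw [← Finsupp.cons_tail d, Finsupp.degree_cons] at hdeg
    rw [Finsupp.cons_tail]
    exact ⟨by omega, hP⟩
  · intro e he
    simp only [mem_coe, mem_filter, mem_exponentsOfDegree, Finsupp.degree_cons,
      Finsupp.cons_zero, and_true] at he ⊢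
    rw [mem_range] at hj
    exact ⟨by omega, he.2⟩
  · intro d hd
    simp only [mem_coe, mem_filter] at hd
    rw [← hd.2, Finsupp.cons_tail]
  · intro e _
    exact Finsupp.tail_cons j e

section MonomialIdeal

variable {K : Type} [Field K] {m : ℕ}

lemma monomial_mem_of_le {J : Ideal (MvPolynomial (Fin m) K)} {g d : Fin m →₀ ℕ} (hgd : g ≤ d)
    (hg : monomial g (1 : K) ∈ J) : monomial d (1 : K) ∈ J :=
  J.mem_of_dvd (monomial_dvd_monomial.2 ⟨Or.inr hgd, dvd_rfl⟩) hg

lemma IsMonomialIdeal.mem_iff {I : Ideal (MvPolynomial (Fin m) K)} (hI : IsMonomialIdeal I)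
    {p : MvPolynomial (Fin m) K} : p ∈ I ↔ ∀ d ∈ p.support, monomial d (1 : K) ∈ I := by
  obtain ⟨G, rfl⟩ := hI
  simp [mem_ideal_span_monomial_image]

lemma IsMonomialIdeal.ext {I I' : Ideal (MvPolynomial (Fin m) K)} (hI : IsMonomialIdeal I)
    (hI' : IsMonomialIdeal I') (h : ∀ d, monomial d (1 : K) ∈ I ↔ monomial d (1 : K) ∈ I') :
    I = I' := by
  ext p
  rw [hI.mem_iff, hI'.mem_iff]
  exact forall₂_congr fun d _ => h d

lemma isMonomialIdeal_of_monomial_mem {I : Ideal (MvPolynomial (Fin m) K)}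
    (h : ∀ p ∈ I, ∀ d ∈ p.support, monomial d (1 : K) ∈ I) : IsMonomialIdeal I := by
  refine ⟨{d | monomial d 1 ∈ I}, le_antisymm (fun p hp => ?_) (Ideal.span_le.2 ?_)⟩
  · exact mem_ideal_span_monomial_image.2 fun d hd => ⟨d, h p hp d hd, le_rfl⟩
  · rintro _ ⟨d, hd, rfl⟩
    exact hd

end MonomialIdeal

section Slice

variable {K : Type} [Field K] {n : ℕ}

lemma varShift_monomial (e : Fin n →₀ ℕ) (c : K) :
    varShift K n (monomial e c) = monomial (Finsupp.cons 0 e) c := by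
  simp [varShift, rename_monomial, Finsupp.mapDomain_succ_eq_cons]

lemma X_zero_pow (j : ℕ) :
    (X 0 : MvPolynomial (Fin (n + 1)) K) ^ j = monomial (Finsupp.cons j 0) 1 := by
  rw [X_pow_eq_monomial, Finsupp.cons_zero_eq_single_zero]

lemma coeff_cons_varShift_mul_X_zero_pow (j : ℕ) (e : Fin n →₀ ℕ) (q : MvPolynomial (Fin n) K) :
    coeff (Finsupp.cons j e) (varShift K n q * X 0 ^ j) = coeff e q := by
  have hsplit : Finsupp.cons j e = Finsupp.cons 0 e + Finsupp.cons j 0 := by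
    rw [Finsupp.cons_add_cons, zero_add, add_zero]
  rw [X_zero_pow, hsplit, coeff_mul_monomial, mul_one, ← Finsupp.mapDomain_succ_eq_cons, varShift,
    coeff_rename_mapDomain _ (Fin.succ_injective n)]

lemma mem_sliceIdeal_iff {J : Ideal (MvPolynomial (Fin (n + 1)) K)} {j : ℕ}
    {q : MvPolynomial (Fin n) K} : q ∈ sliceIdeal J j ↔ varShift K n q * X 0 ^ j ∈ J :=
  Ideal.mem_colon_span_singleton

lemma monomial_mem_sliceIdeal_iff {J : Ideal (MvPolynomial (Fin (n + 1)) K)} {j : ℕ}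
    {e : Fin n →₀ ℕ} :
    monomial e (1 : K) ∈ sliceIdeal J j ↔ monomial (Finsupp.cons j e) (1 : K) ∈ J := by
  rw [mem_sliceIdeal_iff, varShift_monomial, X_zero_pow, monomial_mul, Finsupp.cons_add_cons,
    zero_add, add_zero, mul_one]

lemma IsMonomialIdeal.sliceIdeal {J : Ideal (MvPolynomial (Fin (n + 1)) K)}
    (hJ : IsMonomialIdeal J) (j : ℕ) : IsMonomialIdeal (sliceIdeal J j) := by
  refine isMonomialIdeal_of_monomial_mem fun q hq e he => ?_
  rw [mem_sliceIdeal_iff] at hq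
  rw [monomial_mem_sliceIdeal_iff]
  refine hJ.mem_iff.1 hq _ ?_
  rwa [mem_support_iff, coeff_cons_varShift_mul_X_zero_pow, ← mem_support_iff]

lemma map_varShift_span_monomial (G : Set (Fin n →₀ ℕ)) :
    (Ideal.span ((fun d => monomial d (1 : K)) '' G)).map (varShift K n) =
      Ideal.span ((fun d => monomial d (1 : K)) '' (Finsupp.cons 0 '' G)) := by
  rw [Ideal.map_span, Set.image_image, Set.image_image]
  simp only [varShift_monomial]

lemma IsMonomialIdeal.map_varShift {I : Ideal (MvPolynomial (Fin n) K)} (hI : IsMonomialIdeal I) :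
    IsMonomialIdeal (I.map (varShift K n)) := by
  obtain ⟨G, rfl⟩ := hI
  exact ⟨_, map_varShift_span_monomial G⟩

lemma sliceIdeal_map_varShift {I : Ideal (MvPolynomial (Fin n) K)} (hI : IsMonomialIdeal I)
    (j : ℕ) : sliceIdeal (I.map (varShift K n)) j = I := by
  refine (hI.map_varShift.sliceIdeal j).ext hI fun e => ?_
  obtain ⟨G, rfl⟩ := hI
  simp [monomial_mem_sliceIdeal_iff, map_varShift_span_monomial, mem_ideal_span_monomial_image,
    Finsupp.cons_le_cons_iff]

end Slice

section MinimalGenerators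

variable {K : Type} [Field K]

lemma exists_isMinGen_le {m : ℕ} {J : Ideal (MvPolynomial (Fin m) K)} {d : Fin m →₀ ℕ}
    (hd : monomial d (1 : K) ∈ J) : ∃ g ≤ d, IsMinGen J g := by
  obtain ⟨g, ⟨hgd, hgJ⟩, hmin⟩ :=
    wellFounded_lt.has_min {g | g ≤ d ∧ monomial g (1 : K) ∈ J} ⟨d, le_rfl, hd⟩
  refine ⟨g, hgd, hgJ, fun i hi hmem => hmin _ ⟨tsub_le_self.trans hgd, hmem⟩ ?_⟩
  refine lt_of_le_of_ne tsub_le_self fun h => ?_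
  have := congrArg (· i) h
  simp only [Finsupp.coe_tsub, Pi.sub_apply, Finsupp.single_eq_same] at this
  omega

variable {n α : ℕ} {J : Ideal (MvPolynomial (Fin (n + 1)) K)}

lemma monomial_cons_mem_iff_of_le (hmax : ∀ d, IsMinGen J d → d 0 ≤ α) {j : ℕ} (hj : α ≤ j)
    {e : Fin n →₀ ℕ} :
    monomial (Finsupp.cons j e) (1 : K) ∈ J ↔ monomial (Finsupp.cons α e) (1 : K) ∈ J := by
  refine ⟨fun h => ?_, monomial_mem_of_le (Finsupp.cons_le_cons_iff.2 ⟨hj, le_rfl⟩)⟩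
  obtain ⟨g, hg, hgJ⟩ := exists_isMinGen_le h
  rw [← Finsupp.cons_tail g, Finsupp.cons_le_cons_iff] at hg
  refine monomial_mem_of_le ?_ hgJ.1
  rw [← Finsupp.cons_tail g, Finsupp.cons_le_cons_iff]
  exact ⟨hmax g hgJ, hg.2⟩

lemma sliceIdeal_eq_of_le (hJ : IsMonomialIdeal J) (hmax : ∀ d, IsMinGen J d → d 0 ≤ α) {j : ℕ}
    (hj : α ≤ j) : sliceIdeal J j = sliceIdeal J α :=
  (hJ.sliceIdeal j).ext (hJ.sliceIdeal α) fun _ => by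
    rw [monomial_mem_sliceIdeal_iff, monomial_mem_sliceIdeal_iff,
      monomial_cons_mem_iff_of_le hmax hj]

end MinimalGenerators

section HilbertFunction

open scoped Classical

variable {K : Type} [Field K]

lemma restrictSupport_inf_restrictSupport {σ : Type*} (s t : Set (σ →₀ ℕ)) :
    restrictSupport K s ⊓ restrictSupport K t = restrictSupport K (s ∩ t) := by
  ext p
  simp [mem_restrictSupport_iff, Set.subset_inter_iff]

lemma finrank_restrictSupport {σ : Type*} (D : Finset (σ →₀ ℕ)) :
    Module.finrank K (restrictSupport K (D : Set (σ →₀ ℕ))) = D.card := by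
  rw [Module.finrank_eq_card_basis (basisRestrictSupport K _)]
  simp

lemma homogeneousSubmodule_eq_restrictSupport (m s : ℕ) :
    homogeneousSubmodule (Fin m) K s = restrictSupport K ↑(exponentsOfDegree m s) := by
  rw [homogeneousSubmodule_eq_finsupp_supported]
  congr 1
  ext d
  simp [mem_exponentsOfDegree]

lemma IsMonomialIdeal.restrictScalars_eq {m : ℕ} {I : Ideal (MvPolynomial (Fin m) K)}
    (hI : IsMonomialIdeal I) : I.restrictScalars K = restrictSupport K {d | monomial d 1 ∈ I} := by
  ext p
  exact hI.mem_iff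

lemma hilb_eq_card {m : ℕ} {I : Ideal (MvPolynomial (Fin m) K)} (hI : IsMonomialIdeal I) (s : ℕ) :
    hilb I s = #{d ∈ exponentsOfDegree m s | monomial d (1 : K) ∉ I} := by
  rw [hilb, homogeneousSubmodule_eq_restrictSupport, hI.restrictScalars_eq,
    restrictSupport_inf_restrictSupport]
  set A := exponentsOfDegree m s
  have hfilter : ↑A ∩ {d | monomial d (1 : K) ∈ I} = ↑{d ∈ A | monomial d (1 : K) ∈ I} := by
    ext d
    simp
  rw [hfilter, finrank_restrictSupport, finrank_restrictSupport]
  have := card_filter_add_card_filter_not (s := A) (fun d => monomial d (1 : K) ∈ I)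
  omega

lemma hilb_eq_sum_hilb_sliceIdeal {n : ℕ} {J : Ideal (MvPolynomial (Fin (n + 1)) K)}
    (hJ : IsMonomialIdeal J) (s : ℕ) :
    hilb J s = ∑ j ∈ range (s + 1), hilb (sliceIdeal J j) (s - j) := by
  rw [hilb_eq_card hJ, card_filter_exponentsOfDegree_succ]
  refine sum_congr rfl fun j _ => ?_
  rw [hilb_eq_card (hJ.sliceIdeal j)]
  simp only [monomial_mem_sliceIdeal_iff]

lemma hilb_map_varShift {n : ℕ} {I : Ideal (MvPolynomial (Fin n) K)} (hI : IsMonomialIdeal I)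
    (s : ℕ) : hilb (I.map (varShift K n)) s = ∑ j ∈ range (s + 1), hilb I (s - j) := by
  simp only [hilb_eq_sum_hilb_sliceIdeal hI.map_varShift, sliceIdeal_map_varShift hI]

end HilbertFunction

theorem hilbert_function_decomposition_general {K : Type} [Field K] {n : ℕ} (α : ℕ)
    (J : Ideal (MvPolynomial (Fin (n + 1)) K))
    (hJ : IsMonomialIdeal J)
    (hmax : ∀ d, IsMinGen J d → d 0 ≤ α) :
    ∀ s : ℕ, hilb J s =
      (∑ j ∈ Finset.range α, if j ≤ s then hilb (sliceIdeal J j) (s - j) else 0) +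
        (if α ≤ s then hilb (Ideal.map (varShift K n) (sliceIdeal J α)) (s - α) else 0) := by
  intro s
  rw [hilb_eq_sum_hilb_sliceIdeal hJ]
  by_cases hs : α ≤ s
  · rw [if_pos hs, hilb_map_varShift (hJ.sliceIdeal α),
      ← sum_range_add_sum_Ico _ (by omega : α ≤ s + 1), sum_Ico_eq_sum_range,
      show s + 1 - α = s - α + 1 by omega]
    congr 1
    · exact sum_congr rfl fun j hj => by rw [if_pos (by rw [mem_range] at hj; omega)]
    · refine sum_congr rfl fun i _ => ?_
      rw [sliceIdeal_eq_of_le hJ hmax (Nat.le_add_right α i), Nat.sub_add_eq]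
  · rw [if_neg hs, add_zero, ← sum_filter, show (range α).filter (· ≤ s) = range (s + 1) by
      ext j; simp only [mem_filter, mem_range]; omega]

/-- the Hilbert function formula for the decomposition of a monomial ideal. -/
theorem hilbert_function_decomposition {K : Type} [Field K] {n : ℕ} (α : ℕ)
    (J : Ideal (MvPolynomial (Fin (n + 1)) K))
    (hJ : IsMonomialIdeal J)
    (hex : ∃ d, IsMinGen J d ∧ d 0 = α)
    (hmax : ∀ d, IsMinGen J d → d 0 ≤ α) :
    ∀ s : ℕ, hilb J s =
      (∑ j ∈ Finset.range α, if j ≤ s then hilb (sliceIdeal J j) (s - j) else 0) +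
        (if α ≤ s then hilb (Ideal.map (varShift K n) (sliceIdeal J α)) (s - α) else 0) :=
  hilbert_function_decomposition_general α J hJ hmax
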